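/- Let X be a proper geodesic δ-hyperbolic space with base point o, and let γ₁, γ₂ : ℝ → X be geodesic lines with four pairwise distinct endpoints at infinity. Set Δ = d(im γ₁, im γ₂). Then for all s₁, s₂ ∈ ℝ, |γ₁(s₁) − γ₂(s₂)| ≥ Δ + max( d(γ₁(s₁), p_{γ₁}(im γ₂)), d(γ₂(s₂), p_{γ₂}(im γ₁)) ) − 56δ. -/
import Mathlib


/-- The Gromov product `(x|y)_o`. -/
noncomputable def gromovProd {X : Type*} [MetricSpace X] (o x y : X) : ℝ :=
  (dist o x + dist o y - dist x y) / 2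

/-- `δ`-hyperbolicity in Gromov's four-point sense. -/
def IsDeltaHyperbolic (X : Type*) [MetricSpace X] (δ : ℝ) : Prop :=
  ∀ x₀ x₁ x₂ x₃ : X,
    min (gromovProd x₀ x₁ x₂) (gromovProd x₀ x₂ x₃) - δ ≤ gromovProd x₀ x₁ x₃

/-- A geodesic metric space. -/
def IsGeodesicSpace (X : Type*) [MetricSpace X] : Prop :=
  ∀ x y : X, ∃ f : ℝ → X, f 0 = x ∧ f (dist x y) = y ∧
    ∀ s ∈ Set.Icc (0 : ℝ) (dist x y), ∀ t ∈ Set.Icc (0 : ℝ) (dist x y),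
      dist (f s) (f t) = |s - t|

/-- The set of closest-point projections of points of `im γ'` on the geodesic line `γ`. -/
def projSet {X : Type*} [MetricSpace X] (γ γ' : ℝ → X) : Set X :=
  {p : X | ∃ t s : ℝ, p = γ s ∧ ∀ s' : ℝ, dist (γ' t) (γ s) ≤ dist (γ' t) (γ s')}

/-- A nearest-point parameter on a geodesic line exists. -/
lemma exists_min_param {X : Type*} [MetricSpace X] (γ : ℝ → X)
    (h : ∀ s t : ℝ, dist (γ s) (γ t) = |s - t|) (x : X) :
    ∃ a : ℝ, ∀ t : ℝ, dist x (γ a) ≤ dist x (γ t) := by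
  set c : ℝ := dist x (γ 0) with hc
  have hcont : Continuous fun t : ℝ => dist x (γ t) := by
    have hlip : LipschitzWith 1 γ := by
      refine LipschitzWith.of_dist_le_mul fun s t => ?_
      rw [h s t, Real.dist_eq]
      simp
    exact (continuous_const.dist hlip.continuous)
  have hK : IsCompact (Set.Icc (-(2 * c + 1)) (2 * c + 1)) := isCompact_Icc
  have hc0 : 0 ≤ c := dist_nonneg
  have hne : (Set.Icc (-(2 * c + 1)) (2 * c + 1)).Nonempty := ⟨0, by constructor <;> linarith⟩
  obtain ⟨a, haK, hmin⟩ := hK.exists_isMinOn hne hcont.continuousOn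
  refine ⟨a, fun t => ?_⟩
  by_cases ht : t ∈ Set.Icc (-(2 * c + 1)) (2 * c + 1)
  · exact hmin ht
  · have h1 : dist x (γ a) ≤ c := hmin ⟨by linarith, by linarith⟩
    have htabs : 2 * c + 1 ≤ |t| := by
      rcases abs_cases t with ⟨h', _⟩ | ⟨h', _⟩ <;>
        · simp only [Set.mem_Icc, not_and_or, not_le] at ht
          rcases ht with ht | ht <;> linarith
    have h2 : |t| ≤ c + dist x (γ t) := by
      have := dist_triangle (γ 0) x (γ t)
      rw [h 0 t] at this
      simpa [dist_comm, abs_sub_comm] using this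
    linarith

/-- Degenerate right-angled triangle: if `γ a` is a nearest point of the geodesic `γ` to `x`,
then `x`, `γ a`, `γ b` are `4δ`-almost lined up. -/
lemma proj_lined_up {X : Type*} [MetricSpace X] {δ : ℝ} (hδ : 0 ≤ δ)
    (hhyp : IsDeltaHyperbolic X δ) (γ : ℝ → X)
    (h : ∀ s t : ℝ, dist (γ s) (γ t) = |s - t|) (x : X) (a b : ℝ)
    (hmin : ∀ t : ℝ, dist x (γ a) ≤ dist x (γ t)) :
    dist x (γ a) + dist (γ a) (γ b) ≤ dist x (γ b) + 4 * δ := by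
  set d1 : ℝ := dist x (γ a) with hd1
  set d2 : ℝ := dist x (γ b) with hd2
  set L : ℝ := |a - b| with hL
  have hLd : dist (γ a) (γ b) = L := h a b
  set t : ℝ := (d1 + L - d2) / 2 with htdef
  have ht0 : 0 ≤ t := by
    have := dist_triangle x (γ a) (γ b)
    rw [hLd] at this
    rw [htdef]; linarith
  have htL : t ≤ L := by
    have := dist_triangle x (γ b) (γ a)
    have hsymm : dist (γ b) (γ a) = L := by rw [dist_comm, hLd]
    rw [hsymm] at this
    rw [htdef]; linarith
  -- the point between `a` and `b` at distance `t` from `a`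
  set u : ℝ := if a ≤ b then a + t else a - t with hu
  have hau : |a - u| = t := by
    rw [hu]
    split_ifs with hab
    · rw [show a - (a + t) = -t by ring, abs_neg, abs_of_nonneg ht0]
    · rw [show a - (a - t) = t by ring, abs_of_nonneg ht0]
  have hub : |u - b| = L - t := by
    rw [hu]
    split_ifs with hab
    · have hLab : L = b - a := by rw [hL, abs_of_nonpos (by linarith)]; ring
      rw [show a + t - b = -(L - t) by rw [hLab]; ring, abs_neg, abs_of_nonneg (by linarith)]
    · have hLab : L = a - b := by rw [hL, abs_of_nonneg (by linarith)]
      rw [show a - t - b = L - t by rw [hLab]; ring, abs_of_nonneg (by linarith)]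
  set d3 : ℝ := dist x (γ u) with hd3
  have hkey := hhyp x (γ a) (γ u) (γ b)
  unfold gromovProd at hkey
  rw [show dist (γ a) (γ u) = t by rw [h a u, hau],
      show dist (γ u) (γ b) = L - t by rw [h u b, hub],
      hLd, ← hd1, ← hd2, ← hd3] at hkey
  have hmu : d1 ≤ d3 := hmin u
  have hAB : (d1 + d3 - t) / 2 = (d3 + d2 - (L - t)) / 2 := by
    rw [htdef]; ring
  rw [hAB, min_self] at hkey
  rw [htdef] at hkey
  rw [hLd]
  linarith

/-- Linear divergence of geodesic lines with distinct endpoints: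
`|γ₁(s₁) - γ₂(s₂)| ≥ Δ + max(d(γ₁(s₁), p_{γ₁}(im γ₂)), d(γ₂(s₂), p_{γ₂}(im γ₁))) - 56δ`,
where `Δ = d(im γ₁, im γ₂)`. Distinctness of the four endpoints at infinity is expressed by
boundedness of the Gromov products along the corresponding rays. -/
theorem linear_divergence_of_geodesics
    (X : Type*) [MetricSpace X] [ProperSpace X] (δ : ℝ) (hδ : 0 ≤ δ)
    (hgeo : IsGeodesicSpace X) (hhyp : IsDeltaHyperbolic X δ) (o : X)
    (γ₁ γ₂ : ℝ → X)
    (h₁ : ∀ s t : ℝ, dist (γ₁ s) (γ₁ t) = |s - t|)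
    (h₂ : ∀ s t : ℝ, dist (γ₂ s) (γ₂ t) = |s - t|)
    (hdistinct : ∀ ε₁ ∈ ({1, -1} : Set ℝ), ∀ ε₂ ∈ ({1, -1} : Set ℝ),
      BddAbove {x : ℝ | ∃ s : ℝ, 0 ≤ s ∧ ∃ t : ℝ, 0 ≤ t ∧
        x = gromovProd o (γ₁ (ε₁ * s)) (γ₂ (ε₂ * t))}) :
    ∀ s₁ s₂ : ℝ,
      sInf {d : ℝ | ∃ s t : ℝ, d = dist (γ₁ s) (γ₂ t)} +
        max (Metric.infDist (γ₁ s₁) (projSet γ₁ γ₂))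
            (Metric.infDist (γ₂ s₂) (projSet γ₂ γ₁)) - 56 * δ
        ≤ dist (γ₁ s₁) (γ₂ s₂) := by
  intro s₁ s₂
  set D : Set ℝ := {d : ℝ | ∃ s t : ℝ, d = dist (γ₁ s) (γ₂ t)} with hD
  have hbdd : BddBelow D := ⟨0, by rintro d ⟨s, t, rfl⟩; positivity⟩
  obtain ⟨a, ha⟩ := exists_min_param γ₂ h₂ (γ₁ s₁)
  obtain ⟨b, hb⟩ := exists_min_param γ₁ h₁ (γ₂ s₂)
  have hpa : γ₂ a ∈ projSet γ₂ γ₁ := ⟨s₁, a, rfl, ha⟩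
  have hqb : γ₁ b ∈ projSet γ₁ γ₂ := ⟨s₂, b, rfl, hb⟩
  have hIa : Metric.infDist (γ₂ s₂) (projSet γ₂ γ₁) ≤ dist (γ₂ s₂) (γ₂ a) :=
    Metric.infDist_le_dist_of_mem hpa
  have hIb : Metric.infDist (γ₁ s₁) (projSet γ₁ γ₂) ≤ dist (γ₁ s₁) (γ₁ b) :=
    Metric.infDist_le_dist_of_mem hqb
  have hD1 : sInf D ≤ dist (γ₁ s₁) (γ₂ a) := csInf_le hbdd ⟨s₁, a, rfl⟩
  have hD2 : sInf D ≤ dist (γ₁ b) (γ₂ s₂) := csInf_le hbdd ⟨b, s₂, rfl⟩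
  have key1 : dist (γ₁ s₁) (γ₂ a) + dist (γ₂ a) (γ₂ s₂) ≤ dist (γ₁ s₁) (γ₂ s₂) + 4 * δ :=
    proj_lined_up hδ hhyp γ₂ h₂ (γ₁ s₁) a s₂ ha
  have key2 : dist (γ₂ s₂) (γ₁ b) + dist (γ₁ b) (γ₁ s₁) ≤ dist (γ₂ s₂) (γ₁ s₁) + 4 * δ :=
    proj_lined_up hδ hhyp γ₁ h₁ (γ₂ s₂) b s₁ hb
  have hA : sInf D + Metric.infDist (γ₁ s₁) (projSet γ₁ γ₂) - 56 * δ
      ≤ dist (γ₁ s₁) (γ₂ s₂) := by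
    have e1 : dist (γ₁ b) (γ₁ s₁) = dist (γ₁ s₁) (γ₁ b) := dist_comm _ _
    have e2 : dist (γ₂ s₂) (γ₁ b) = dist (γ₁ b) (γ₂ s₂) := dist_comm _ _
    have e3 : dist (γ₂ s₂) (γ₁ s₁) = dist (γ₁ s₁) (γ₂ s₂) := dist_comm _ _
    linarith
  have hB : sInf D + Metric.infDist (γ₂ s₂) (projSet γ₂ γ₁) - 56 * δ
      ≤ dist (γ₁ s₁) (γ₂ s₂) := by
    have e1 : dist (γ₂ s₂) (γ₂ a) = dist (γ₂ a) (γ₂ s₂) := dist_comm _ _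
    linarith
  rcases max_choice (Metric.infDist (γ₁ s₁) (projSet γ₁ γ₂))
    (Metric.infDist (γ₂ s₂) (projSet γ₂ γ₁)) with hm | hm <;> rw [hm]
  · exact hA
  · exact hB
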